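/- Let D ⊆ ℂ^N be a convex domain. Then there exists a unique integer k with 0 ≤ k ≤ N such that for some ℂ-linear automorphism T of ℂ^N and some convex domain D' ⊆ ℂ^k containing no complex affine line, T(D) = D' × ℂ^{N−k}. That is: such a decomposition exists for exactly one value of k (and for that k the factor D' is a nonempty open convex subset of ℂ^k containing no complex affine line). -/

import Mathlib

/-- A convex domain in `ℂ^k`: a nonempty open convex subset. -/
def IsConvexDomain {k : ℕ} (D : Set (Fin k → ℂ)) : Prop :=
  IsOpen D ∧ Convex ℝ D ∧ D.Nonempty

/-- `S` contains a complex affine line `{p + ζ • v : ζ ∈ ℂ}` with `v ≠ 0`. -/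
def ContainsComplexLine {E : Type*} [AddCommGroup E] [Module ℂ E] (S : Set E) : Prop :=
  ∃ p v : E, v ≠ 0 ∧ ∀ ζ : ℂ, p + ζ • v ∈ S

/-! The complex directions in which `D` is invariant under translation form a subspace `V`,
the lineality space of `D`. Since `D` is open and convex, every complex line in `D` is parallel
to `V`: a line through `p` is carried to any `q ∈ D` by convex combinations with a point slightly
beyond `q` on the ray from `p`. Splitting `ℂ^N = W ⊕ V` writes `D` as `(D ∩ W) × V` with `D ∩ W`
free of lines; conversely, in any such splitting the factor `ℂ^{N-k}` is the image of `V`,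
so `k = N - dim V`. -/

open Module Set Filter Topology

section Lineality

variable (𝕜 : Type*) {E F G : Type*}

def linealitySpace [Semiring 𝕜] [AddCommMonoid E] [Module 𝕜 E] (S : Set E) : Submodule 𝕜 E where
  carrier := {v | ∀ q ∈ S, ∀ ζ : 𝕜, q + ζ • v ∈ S}
  add_mem' {v w} hv hw q hq ζ := by simpa only [smul_add, add_assoc] using hw _ (hv q hq ζ) ζ
  zero_mem' q hq ζ := by simpa only [smul_zero, add_zero] using hq
  smul_mem' c v hv q hq ζ := by simpa only [smul_smul] using hv q hq (ζ * c)

variable {𝕜}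

section Semiring

variable [Semiring 𝕜] [AddCommMonoid E] [Module 𝕜 E] [AddCommMonoid F] [Module 𝕜 F]
  [AddCommMonoid G] [Module 𝕜 G]

theorem mem_linealitySpace {S : Set E} {v : E} :
    v ∈ linealitySpace 𝕜 S ↔ ∀ q ∈ S, ∀ ζ : 𝕜, q + ζ • v ∈ S :=
  Iff.rfl

theorem linealitySpace_image_linearEquiv (T : E ≃ₗ[𝕜] F) (S : Set E) :
    linealitySpace 𝕜 (T '' S) = (linealitySpace 𝕜 S).map (T : E →ₗ[𝕜] F) := by
  ext v
  simp only [Submodule.mem_map_equiv, mem_linealitySpace, T.image_eq_preimage_symm, mem_preimage,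
    map_add, map_smul]
  exact ⟨fun h q hq ζ => by simpa using h (T q) (by simpa using hq) ζ,
    fun h x hx ζ => h _ hx ζ⟩

theorem linealitySpace_prod_univ (S : Set F) :
    linealitySpace 𝕜 (S ×ˢ (univ : Set G)) = (linealitySpace 𝕜 S).prod ⊤ := by
  ext ⟨a, b⟩
  simp only [Submodule.mem_prod, Submodule.mem_top, and_true, mem_linealitySpace, Prod.forall,
    mem_prod, mem_univ, Prod.mk_add_mk, Prod.smul_mk]
  exact ⟨fun h q hq ζ => h q 0 hq ζ, fun h q _ hq ζ => h q hq ζ⟩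

end Semiring

theorem eq_prod_univ_of_bot_prod_top_le_linealitySpace [Ring 𝕜] [AddCommGroup F] [Module 𝕜 F]
    [AddCommGroup G] [Module 𝕜 G] {S : Set (F × G)}
    (h : (⊥ : Submodule 𝕜 F).prod ⊤ ≤ linealitySpace 𝕜 S) :
    S = ((fun x => (x, (0 : G))) ⁻¹' S) ×ˢ univ := by
  ext ⟨x, y⟩
  have hy : ((0 : F), y) ∈ linealitySpace 𝕜 S := h ⟨rfl, trivial⟩
  simp only [mem_prod, mem_preimage, mem_univ, and_true]
  exact ⟨fun hxy => by simpa using hy _ hxy (-1), fun hx => by simpa using hy _ hx 1⟩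

theorem finrank_bot_prod_top [Ring 𝕜] [StrongRankCondition 𝕜] [AddCommGroup F] [Module 𝕜 F]
    [AddCommGroup G] [Module 𝕜 G] :
    finrank 𝕜 ((⊥ : Submodule 𝕜 F).prod (⊤ : Submodule 𝕜 G)) = finrank 𝕜 G := by
  have : (⊥ : Submodule 𝕜 F).prod (⊤ : Submodule 𝕜 G) = LinearMap.range (LinearMap.inr 𝕜 F G) := by
    ext ⟨x, y⟩; simp [eq_comm]
  rw [this, LinearMap.finrank_range_of_inj LinearMap.inr_injective]

end Lineality

theorem Convex.add_smul_mem_of_forall_add_smul_mem {E : Type*} [AddCommGroup E] [Module ℝ E]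
    [TopologicalSpace E] [ContinuousAdd E] [ContinuousSMul ℝ E] {D : Set E} (hconv : Convex ℝ D)
    (hop : IsOpen D) {p v : E} (hline : ∀ t : ℝ, p + t • v ∈ D) {q : E} (hq : q ∈ D)
    (t : ℝ) : q + t • v ∈ D := by
  obtain ⟨ε, hε, hqε⟩ : ∃ ε : ℝ, 0 < ε ∧ q + ε • (q - p) ∈ D := by
    have hcont : Continuous fun s : ℝ => q + s • (q - p) := by fun_prop
    have : ∀ᶠ s in 𝓝[>] (0 : ℝ), q + s • (q - p) ∈ D :=
      nhdsWithin_le_nhds (hcont.tendsto' 0 q (by simp) (hop.mem_nhds hq))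
    exact (this.and self_mem_nhdsWithin).exists.imp fun s h => ⟨h.2, h.1⟩
  have := hconv hqε (hline ((1 + ε) / ε * t)) (a := 1 / (1 + ε)) (b := ε / (1 + ε))
    (by positivity) (by positivity) (by field_simp)
  convert this using 1
  match_scalars <;> field_simp
  ring

section ComplexLine

variable {E : Type*} [AddCommGroup E] [Module ℂ E] [Module ℝ E] [IsScalarTower ℝ ℂ E]
  [TopologicalSpace E] [ContinuousAdd E] [ContinuousSMul ℝ E] {D : Set E}

theorem IsOpen.mem_linealitySpace_of_forall_add_smul_mem (hop : IsOpen D) (hconv : Convex ℝ D)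
    {p v : E} (hline : ∀ ζ : ℂ, p + ζ • v ∈ D) : v ∈ linealitySpace ℂ D := by
  intro q hq ζ
  have hreal : ∀ t : ℝ, p + t • ζ • v ∈ D := fun t => by
    simpa only [smul_assoc] using hline (t • ζ)
  simpa only [one_smul] using hconv.add_smul_mem_of_forall_add_smul_mem hop hreal hq 1

theorem IsOpen.linealitySpace_eq_bot_iff (hop : IsOpen D) (hconv : Convex ℝ D)
    (hne : D.Nonempty) : linealitySpace ℂ D = ⊥ ↔ ¬ContainsComplexLine D := by
  constructor
  · rintro hbot ⟨p, v, hv, hline⟩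
    exact hv <| (Submodule.eq_bot_iff _).1 hbot v <|
      hop.mem_linealitySpace_of_forall_add_smul_mem hconv hline
  · intro hnoline
    refine (Submodule.eq_bot_iff _).2 fun v hv => ?_
    by_contra hv0
    obtain ⟨q, hq⟩ := hne
    exact hnoline ⟨q, v, hv0, hv q hq⟩

end ComplexLine

theorem Submodule.exists_linearEquiv_map_eq_bot_prod_top {K E F G : Type*} [DivisionRing K]
    [AddCommGroup E] [Module K E] [AddCommGroup F] [Module K F] [AddCommGroup G] [Module K G]
    [FiniteDimensional K E] [FiniteDimensional K F] [FiniteDimensional K G] (V : Submodule K E)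
    (hF : finrank K F + finrank K V = finrank K E) (hG : finrank K G = finrank K V) :
    ∃ T : E ≃ₗ[K] F × G, V.map (T : E →ₗ[K] F × G) = (⊥ : Submodule K F).prod ⊤ := by
  obtain ⟨W, hVW⟩ := V.exists_isCompl
  have hW : finrank K W = finrank K F := by
    have := Submodule.finrank_add_eq_of_isCompl hVW; omega
  let eW : W ≃ₗ[K] F := LinearEquiv.ofFinrankEq _ _ hW
  let eV : V ≃ₗ[K] G := LinearEquiv.ofFinrankEq _ _ hG.symm
  refine ⟨(W.prodEquivOfIsCompl V hVW.symm).symm.trans (eW.prodCongr eV), ?_⟩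
  ext ⟨x, y⟩
  simp only [Submodule.mem_map_equiv, LinearEquiv.symm_trans_apply, LinearEquiv.prodCongr_symm,
    LinearEquiv.prodCongr_apply, LinearEquiv.symm_symm, Submodule.coe_prodEquivOfIsCompl',
    Submodule.mem_prod, Submodule.mem_bot, Submodule.mem_top, and_true]
  rw [V.add_mem_iff_left (eV.symm y).2]
  refine ⟨fun hx => ?_, fun hx => by simp [hx]⟩
  have : (eW.symm x : E) = 0 := Submodule.disjoint_def.1 hVW.disjoint _ hx (eW.symm x).2
  simpa using this

theorem exists_decomposition_of_map_linealitySpace {N k m : ℕ} {D : Set (Fin N → ℂ)}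
    (hD : IsConvexDomain D) (T : (Fin N → ℂ) ≃ₗ[ℂ] (Fin k → ℂ) × (Fin m → ℂ))
    (hT : (linealitySpace ℂ D).map (T : (Fin N → ℂ) →ₗ[ℂ] (Fin k → ℂ) × (Fin m → ℂ)) =
      (⊥ : Submodule ℂ _).prod ⊤) :
    ∃ D' : Set (Fin k → ℂ), IsConvexDomain D' ∧ ¬ContainsComplexLine D' ∧
      T '' D = D' ×ˢ (univ : Set (Fin m → ℂ)) := by
  obtain ⟨hop, hconv, hne⟩ := hD
  set S := T '' D
  have hSopen : IsOpen S := T.toContinuousLinearEquiv.isOpenMap D hop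
  have hSconv : Convex ℝ S := hconv.linear_image (T.toLinearMap.restrictScalars ℝ)
  have hSlin : linealitySpace ℂ S = (⊥ : Submodule ℂ _).prod ⊤ := by
    rw [linealitySpace_image_linearEquiv, hT]
  set D' := (fun x => (x, (0 : Fin m → ℂ))) ⁻¹' S
  have hSD' : S = D' ×ˢ univ := eq_prod_univ_of_bot_prod_top_le_linealitySpace hSlin.ge
  have hD'open : IsOpen D' := hSopen.preimage (Continuous.prodMk_left 0)
  have hD'conv : Convex ℝ D' := hSconv.linear_preimage (LinearMap.inl ℝ _ _)
  have hD'ne : D'.Nonempty := by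
    have hSne : S.Nonempty := hne.image T
    rw [hSD', prod_nonempty_iff] at hSne
    exact hSne.1
  have hD'lin : linealitySpace ℂ D' = ⊥ := by
    refine (Submodule.eq_bot_iff _).2 fun v hv => ?_
    have : (v, (0 : Fin m → ℂ)) ∈ linealitySpace ℂ S := by
      rw [hSD', linealitySpace_prod_univ]; exact ⟨hv, trivial⟩
    simpa [hSlin] using this
  exact ⟨D', ⟨hD'open, hD'conv, hD'ne⟩,
    (hD'open.linealitySpace_eq_bot_iff hD'conv hD'ne).1 hD'lin, hSD'⟩

theorem finrank_linealitySpace_of_image_eq_prod_univ {K E F G : Type*} [DivisionRing K]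
    [AddCommGroup E] [Module K E] [AddCommGroup F] [Module K F] [AddCommGroup G] [Module K G]
    (T : E ≃ₗ[K] F × G) {D : Set E} {D' : Set F} (hD' : linealitySpace K D' = ⊥)
    (hT : T '' D = D' ×ˢ (univ : Set G)) :
    finrank K (linealitySpace K D) = finrank K G := by
  rw [← T.finrank_map_eq, ← linealitySpace_image_linearEquiv, hT, linealitySpace_prod_univ, hD',
    finrank_bot_prod_top]

/-- Proposition 1.2, canonical complete hyperbolic decomposition:
for a convex domain `D ⊆ ℂ^N` there is a unique `k`, `0 ≤ k ≤ N`, such that, up to a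
`ℂ`-linear change of coordinates, `D = D' × ℂ^{N-k}` with `D' ⊆ ℂ^k` a convex domain
containing no complex affine line. -/
theorem canonical_decomposition {N : ℕ} (D : Set (Fin N → ℂ)) (hD : IsConvexDomain D) :
    ∃! k : ℕ, k ≤ N ∧
      ∃ (T : (Fin N → ℂ) ≃ₗ[ℂ] ((Fin k → ℂ) × (Fin (N - k) → ℂ)))
        (D' : Set (Fin k → ℂ)),
        IsConvexDomain D' ∧ ¬ ContainsComplexLine D' ∧
        T '' D = D' ×ˢ (Set.univ : Set (Fin (N - k) → ℂ)) := by
  set m := finrank ℂ (linealitySpace ℂ D)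
  have hm : m ≤ N := by simpa using (linealitySpace ℂ D).finrank_le
  refine ⟨N - m, ⟨Nat.sub_le N m, ?_⟩, ?_⟩
  · obtain ⟨T, hT⟩ := (linealitySpace ℂ D).exists_linearEquiv_map_eq_bot_prod_top
      (F := Fin (N - m) → ℂ) (G := Fin (N - (N - m)) → ℂ)
      (by simp only [finrank_fin_fun]; omega) (by simp only [finrank_fin_fun]; omega)
    obtain ⟨D', hD', hnoline, hTD⟩ := exists_decomposition_of_map_linealitySpace hD T hT
    exact ⟨T, D', hD', hnoline, hTD⟩
  · rintro k ⟨hk, T, D', ⟨hop', hconv', hne'⟩, hnoline, hTD⟩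
    have := finrank_linealitySpace_of_image_eq_prod_univ T
      ((hop'.linealitySpace_eq_bot_iff hconv' hne').2 hnoline) hTD
    simp only [finrank_fin_fun] at this
    omega
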